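/- For a nonnegative integer $n$, reals $c > 0$ and $b$, the Gaussian-Hermite Fourier identity $\int_{\mathbb{R}} (c + \sqrt{-1}\,u)^n e^{-\pi u^2 - 2\pi\sqrt{-1}\, b u}\, du = (4\pi)^{-n/2} H_n(\pi^{1/2}(c+b)) e^{-\pi b^2}$ holds, where $H_n$ is the $n$-th Hermite polynomial. -/

import Mathlib

/-! Both sides, as functions of `b`, satisfy `I₀ = e^{-πb²}` and
`I_{n+1} = c I_n - (2π)⁻¹ I_n'`. For the integral, `I_n` is the Fourier transform of
`(c + iu)ⁿ e^{-πu²}`, the Gaussian is its own Fourier transform, and multiplying by `-2πiu`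
differentiates the Fourier transform. For the right-hand side this is the Hermite recurrence
`(H_n(x) e^{-x²})' = -H_{n+1}(x) e^{-x²}` from the Rodrigues formula, together with
`(4π)^{-1/2} = 1/(2√π)`. -/

open MeasureTheory

/-- The `n`-th (physicists') Hermite polynomial `H_n(x) = (-1)^n e^{x^2} (d/dx)^n e^{-x^2}`. -/
noncomputable def hermiteH (n : ℕ) (x : ℝ) : ℝ :=
  (-1) ^ n * Real.exp (x ^ 2) * iteratedDeriv n (fun y => Real.exp (-(y ^ 2))) x

open Complex Polynomial Real
open scoped FourierTransform

theorem integrable_pow_mul_exp_neg_mul_sq {b : ℝ} (hb : 0 < b) (k : ℕ) :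
    Integrable fun x : ℝ => x ^ k * Real.exp (-b * x ^ 2) := by
  simpa using integrable_rpow_mul_exp_neg_mul_sq hb (neg_one_lt_zero.trans_le k.cast_nonneg)

theorem integrable_eval_mul_cexp_neg_mul_sq {b : ℝ} (hb : 0 < b) (p : ℂ[X]) :
    Integrable fun x : ℝ => p.eval (x : ℂ) * cexp (-b * x ^ 2) := by
  induction p using Polynomial.induction_on' with
  | add p q hp hq =>
    simp only [eval_add, add_mul]
    exact hp.add hq
  | monomial k a =>
    refine (((integrable_pow_mul_exp_neg_mul_sq hb k).ofReal (𝕜 := ℂ)).const_mul a).congr ?_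
    filter_upwards with x
    simp only [eval_monomial, RCLike.ofReal_mul, RCLike.ofReal_pow, Complex.coe_algebraMap]
    push_cast
    ring

theorem Real.fourier_add_apply {V E : Type*} [NormedAddCommGroup V] [InnerProductSpace ℝ V]
    [FiniteDimensional ℝ V] [MeasurableSpace V] [BorelSpace V] [NormedAddCommGroup E]
    [NormedSpace ℂ E] {f g : V → E} (hf : Integrable f) (hg : Integrable g) (w : V) :
    𝓕 (f + g) w = 𝓕 f w + 𝓕 g w := by
  simp only [fourier_eq, Pi.add_apply, smul_add]
  exact integral_add ((fourierIntegral_convergent_iff w).2 hf)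
    ((fourierIntegral_convergent_iff w).2 hg)

theorem Real.fourier_const_smul_apply {V E : Type*} [NormedAddCommGroup V] [InnerProductSpace ℝ V]
    [FiniteDimensional ℝ V] [MeasurableSpace V] [BorelSpace V] [NormedAddCommGroup E]
    [NormedSpace ℂ E] (r : ℂ) (f : V → E) (w : V) :
    𝓕 (r • f) w = r • 𝓕 f w :=
  congrFun (VectorFourier.fourierIntegral_const_smul _ _ _ f r) w

noncomputable def powGaussian (c : ℝ) (n : ℕ) (x : ℝ) : ℂ :=
  ((c : ℂ) + I * x) ^ n * cexp (-π * x ^ 2)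

theorem integrable_powGaussian (c : ℝ) (n : ℕ) : Integrable (powGaussian c n) := by
  convert integrable_eval_mul_cexp_neg_mul_sq pi_pos ((C (c : ℂ) + C I * X) ^ n) using 2 with x
  simp [powGaussian]

theorem integrable_smul_powGaussian (c : ℝ) (n : ℕ) :
    Integrable fun x : ℝ => x • powGaussian c n x := by
  convert integrable_eval_mul_cexp_neg_mul_sq pi_pos (X * (C (c : ℂ) + C I * X) ^ n) using 2 with x
  simp [powGaussian, mul_assoc]

theorem fourier_powGaussian (c : ℝ) (n : ℕ) (w : ℝ) :
    𝓕 (powGaussian c n) w = ∫ u : ℝ, ((c : ℂ) + I * u) ^ n *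
      cexp (-(π : ℂ) * (u : ℂ) ^ 2 - 2 * (π : ℂ) * I * w * u) := by
  rw [fourier_real_eq_integral_exp_smul]
  congr 1 with u
  rw [smul_eq_mul, powGaussian, mul_left_comm, ← Complex.exp_add]
  push_cast
  ring_nf

theorem fourier_powGaussian_zero (c w : ℝ) :
    𝓕 (powGaussian c 0) w = Real.exp (-π * w ^ 2) := by
  have hG : powGaussian c 0 = fun x : ℝ => cexp (-π * 1 * x ^ 2) := by
    ext x
    simp [powGaussian]
  rw [hG, fourier_gaussian_pi (by simp)]
  push_cast
  simp

theorem fourier_powGaussian_succ (c : ℝ) (n : ℕ) (w : ℝ) :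
    𝓕 (powGaussian c (n + 1)) w =
      c * 𝓕 (powGaussian c n) w - (2 * π : ℂ)⁻¹ * deriv (𝓕 (powGaussian c n)) w := by
  have hsplit : powGaussian c (n + 1) = (c : ℂ) • powGaussian c n +
      (-(2 * π : ℂ)⁻¹) • fun x : ℝ => (-2 * π * I * x) • powGaussian c n x := by
    ext x
    simp only [powGaussian, pow_succ, Pi.add_apply, Pi.smul_apply, smul_eq_mul]
    field_simp
  have hG : Integrable fun x : ℝ => (-2 * π * I * x) • powGaussian c n x := by
    refine ((integrable_smul_powGaussian c n).const_mul (-2 * π * I)).congr ?_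
    filter_upwards with x
    simp only [real_smul, smul_eq_mul]
    ring
  rw [deriv_fourier (integrable_powGaussian c n) (integrable_smul_powGaussian c n), hsplit,
    fourier_add_apply ((integrable_powGaussian c n).smul _) (hG.smul _),
    fourier_const_smul_apply, fourier_const_smul_apply]
  simp only [smul_eq_mul]
  ring

theorem hermiteH_zero (x : ℝ) : hermiteH 0 x = 1 := by
  simp [hermiteH, ← Real.exp_add]

theorem hermiteH_mul_exp_neg_sq (n : ℕ) (x : ℝ) :
    hermiteH n x * Real.exp (-x ^ 2) =
      (-1) ^ n * iteratedDeriv n (fun y => Real.exp (-(y ^ 2))) x := by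
  have h : Real.exp (x ^ 2) * Real.exp (-x ^ 2) = 1 := by rw [← Real.exp_add]; simp
  rw [hermiteH]
  linear_combination (-1) ^ n * iteratedDeriv n (fun y => Real.exp (-(y ^ 2))) x * h

theorem hasDerivAt_hermiteH_mul_exp_neg_sq (n : ℕ) (x : ℝ) :
    HasDerivAt (fun y => hermiteH n y * Real.exp (-y ^ 2))
      (-(hermiteH (n + 1) x * Real.exp (-x ^ 2))) x := by
  have hg : ContDiff ℝ ⊤ fun y : ℝ => Real.exp (-(y ^ 2)) := by fun_prop
  rw [funext (hermiteH_mul_exp_neg_sq n), hermiteH_mul_exp_neg_sq, iteratedDeriv_succ]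
  refine (((hg.differentiable_iteratedDeriv n (by simp)).differentiableAt.hasDerivAt).const_mul
    ((-1 : ℝ) ^ n)).congr_deriv ?_
  ring

theorem hasDerivAt_hermiteH_sqrt_pi_mul_exp (n : ℕ) (c b : ℝ) :
    HasDerivAt (fun b => hermiteH n (√π * (c + b)) * Real.exp (-π * b ^ 2))
      (2 * π * c * (hermiteH n (√π * (c + b)) * Real.exp (-π * b ^ 2))
        - √π * (hermiteH (n + 1) (√π * (c + b)) * Real.exp (-π * b ^ 2))) b := by
  have hs : √π ^ 2 = π := Real.sq_sqrt pi_pos.le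
  have hsplit (n : ℕ) (b : ℝ) : hermiteH n (√π * (c + b)) * Real.exp (-π * b ^ 2) =
      hermiteH n (√π * (c + b)) * Real.exp (-(√π * (c + b)) ^ 2) *
        Real.exp (π * c ^ 2 + 2 * π * c * b) := by
    rw [mul_assoc, ← Real.exp_add]
    congr 2
    linear_combination (c + b) ^ 2 * hs
  simp only [hsplit]
  have hin : HasDerivAt (fun b => √π * (c + b)) √π b := by
    simpa using ((hasDerivAt_id b).const_add c).const_mul √π
  have hexp : HasDerivAt (fun b => Real.exp (π * c ^ 2 + 2 * π * c * b))
      (Real.exp (π * c ^ 2 + 2 * π * c * b) * (2 * π * c)) b := by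
    simpa using (((hasDerivAt_id b).const_mul (2 * π * c)).const_add (π * c ^ 2)).exp
  refine (((hasDerivAt_hermiteH_mul_exp_neg_sq n _).comp b hin).mul hexp).congr_deriv ?_
  simp only [Function.comp_apply]
  ring

theorem ofReal_cpow_neg_succ_div_two {x : ℝ} (hx : 0 < x) (n : ℕ) :
    (x : ℂ) ^ (-((n + 1 : ℕ) : ℂ) / 2) = (x : ℂ) ^ (-(n : ℂ) / 2) * ((√x)⁻¹ : ℝ) := by
  rw [show -((n + 1 : ℕ) : ℂ) / 2 = -(n : ℂ) / 2 + -((1 / 2 : ℝ) : ℂ) by push_cast; ring,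
    cpow_add _ _ (ofReal_ne_zero.2 hx.ne'), cpow_neg, ← ofReal_cpow hx.le, ← Real.sqrt_eq_rpow,
    ofReal_inv]

noncomputable def hermiteGaussian (c : ℝ) (n : ℕ) (b : ℝ) : ℂ :=
  ((4 * π : ℝ) : ℂ) ^ (-(n : ℂ) / 2) * hermiteH n (√π * (c + b)) * Real.exp (-π * b ^ 2)

theorem hermiteGaussian_zero (c b : ℝ) : hermiteGaussian c 0 b = Real.exp (-π * b ^ 2) := by
  simp [hermiteGaussian, hermiteH_zero]

theorem hermiteGaussian_succ (c : ℝ) (n : ℕ) (b : ℝ) :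
    hermiteGaussian c (n + 1) b =
      c * hermiteGaussian c n b - (2 * π : ℂ)⁻¹ * deriv (hermiteGaussian c n) b := by
  have hd : HasDerivAt (hermiteGaussian c n)
      (((4 * π : ℝ) : ℂ) ^ (-(n : ℂ) / 2) *
        ((2 * π * c * (hermiteH n (√π * (c + b)) * Real.exp (-π * b ^ 2))
          - √π * (hermiteH (n + 1) (√π * (c + b)) * Real.exp (-π * b ^ 2)) : ℝ) : ℂ)) b := by
    refine (((hasDerivAt_hermiteH_sqrt_pi_mul_exp n c b).ofReal_comp).const_mul _)
      |>.congr_of_eventuallyEq (Filter.Eventually.of_forall fun b => ?_)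
    simp only [hermiteGaussian, ofReal_mul]
    ring
  have h4 : √(4 * π) = 2 * √π := by
    rw [Real.sqrt_mul zero_le_four, show (4 : ℝ) = 2 ^ 2 by norm_num, Real.sqrt_sq zero_le_two]
  rw [hd.deriv, hermiteGaussian, hermiteGaussian, ofReal_cpow_neg_succ_div_two (by positivity), h4]
  generalize ((4 * π : ℝ) : ℂ) ^ (-(n : ℂ) / 2) = A
  have hs0 : (√π : ℂ) ≠ 0 := ofReal_ne_zero.2 (Real.sqrt_pos.2 pi_pos).ne'
  have hsC : (√π : ℂ) ^ 2 = π := by exact_mod_cast Real.sq_sqrt pi_pos.le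
  push_cast
  rw [← hsC]
  field_simp
  ring

theorem fourier_powGaussian_eq_hermiteGaussian (c : ℝ) (n : ℕ) :
    𝓕 (powGaussian c n) = hermiteGaussian c n := by
  induction n with
  | zero => ext b; rw [fourier_powGaussian_zero, hermiteGaussian_zero]
  | succ n ih => ext b; rw [fourier_powGaussian_succ, hermiteGaussian_succ, ih]

theorem stmt_4_general (n : ℕ) (c : ℝ) (b : ℝ) :
    ∫ u : ℝ, ((c : ℂ) + Complex.I * u) ^ n *
        Complex.exp (-(Real.pi : ℂ) * (u : ℂ) ^ 2 - 2 * (Real.pi : ℂ) * Complex.I * b * u)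
      = ((4 * Real.pi : ℝ) : ℂ) ^ (-(n : ℂ) / 2) *
          hermiteH n (Real.sqrt Real.pi * (c + b)) * Real.exp (-Real.pi * b ^ 2) := by
  rw [← fourier_powGaussian, fourier_powGaussian_eq_hermiteGaussian, hermiteGaussian]

theorem stmt_4 (n : ℕ) (c : ℝ) (hc : 0 < c) (b : ℝ) :
    ∫ u : ℝ, ((c : ℂ) + Complex.I * u) ^ n *
        Complex.exp (-(Real.pi : ℂ) * (u : ℂ) ^ 2 - 2 * (Real.pi : ℂ) * Complex.I * b * u)
      = ((4 * Real.pi : ℝ) : ℂ) ^ (-(n : ℂ) / 2) *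
          hermiteH n (Real.sqrt Real.pi * (c + b)) * Real.exp (-Real.pi * b ^ 2) :=
  stmt_4_general n c b
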